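/- Let q = p^e be a prime power, A a commutative ring containing 𝔽_q, n ≥ 1 an integer, and ζ, h ∈ A elements with ζ^{q^n} = 0 and h^{q^n} = 0. Then each z − ζ^{q^j} is a unit of A((z)), the matrix η_{n,h} is invertible over A((z)), and η_{n,h}⁻¹ · diag(z,1) · σ(η_{n,h}) equals the matrix with rows (z − ζ, 0) and (h, 1). -/

import Mathlib

/-! Write `u j = z - ζ ^ q ^ j`: it is a unit, being the unit `z` minus a nilpotent constant.
Since `σ` raises coefficients to the `q`-th power, it fixes `z` and sends `u j` to `u (j + 1)`,
while `u n = z` and `h ^ q ^ n = 0`. Hence applying `σ` to the entries of `η` shifts every index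
by one, and the shifted products and sums telescope against the first factor `u 0 = z - ζ`,
giving `diag(z, 1) · σ(η) = η · [[z - ζ, 0], [h, 1]]`. -/

/-- The quasi-isogeny matrix `η_{n,h}` over `A((z))`, with rows
`(∏_{i=0}^{n-1} z·(z−ζ^{q^i})⁻¹, 0)` and `(−∑_{i=0}^{n-1} h^{q^i}·∏_{j=0}^{i}(z−ζ^{q^j})⁻¹, 1)`. -/
noncomputable def eta (q : ℕ) {A : Type*} [CommRing A] (ζ h : A) (n : ℕ) :
    Matrix (Fin 2) (Fin 2) (LaurentSeries A) :=
  !![∏ i ∈ Finset.range n, (HahnSeries.single (1 : ℤ) (1 : A) : LaurentSeries A) *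
        Ring.inverse ((HahnSeries.single (1 : ℤ) (1 : A) : LaurentSeries A) -
          HahnSeries.C (ζ ^ q ^ i)), 0;
     -∑ i ∈ Finset.range n, HahnSeries.C (h ^ q ^ i) *
        ∏ j ∈ Finset.range (i + 1),
          Ring.inverse ((HahnSeries.single (1 : ℤ) (1 : A) : LaurentSeries A) -
            HahnSeries.C (ζ ^ q ^ j)), 1]

open Finset HahnSeries

theorem map_ringInverse {M N F : Type*} [MonoidWithZero M] [MonoidWithZero N] [FunLike F M N]
    [MonoidHomClass F M N] (f : F) {x : M} (hx : IsUnit x) :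
    f (Ring.inverse x) = Ring.inverse (f x) := by
  obtain ⟨u, rfl⟩ := hx
  rw [Ring.inverse_unit]
  exact (Ring.inverse_unit (Units.map (f : M →* N) u)).symm

theorem Matrix.map_lowerUnitriangular {R S : Type*} [NonAssocSemiring R] [NonAssocSemiring S]
    (f : R →+* S) (a b : R) :
    (!![a, 0; b, 1]).map f = !![f a, 0; f b, 1] := by
  ext i j; fin_cases i <;> fin_cases j <;> simp

theorem Matrix.diagonal_mul_eq_mul_lowerUnitriangular {R : Type*} [Semiring R]
    {z a b a' b' w c : R}
    (h₁ : z * a' = a * w) (h₂ : b' = b * w + c) :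
    Matrix.diagonal ![z, 1] * !![a', 0; b', 1] = !![a, 0; b, 1] * !![w, 0; c, 1] := by
  simp [Matrix.diagonal_vec2, h₁, h₂]

section Telescoping

variable {R : Type*} [CommRing R] (u : ℕ → R) {n : ℕ}

theorem mul_prod_range_mul_inverse_succ {z : R} (hz : IsUnit z) (hu₀ : IsUnit (u 0))
    (hun : u n = z) :
    z * ∏ i ∈ range n, z * Ring.inverse (u (i + 1)) =
      (∏ i ∈ range n, z * Ring.inverse (u i)) * u 0 := by
  have hshift : ∏ i ∈ range (n + 1), z * Ring.inverse (u i) =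
      (∏ i ∈ range n, z * Ring.inverse (u (i + 1))) * (z * Ring.inverse (u 0)) :=
    prod_range_succ' _ n
  rw [prod_range_succ, hun, Ring.mul_inverse_cancel z hz, mul_one] at hshift
  rw [hshift, mul_assoc, mul_assoc, Ring.inverse_mul_cancel _ hu₀, mul_one, mul_comm]

theorem neg_sum_range_mul_prod_inverse_succ (c : ℕ → R) (hu₀ : IsUnit (u 0)) (hcn : c n = 0) :
    -∑ i ∈ range n, c (i + 1) * ∏ j ∈ range (i + 1), Ring.inverse (u (j + 1)) =
      (-∑ i ∈ range n, c i * ∏ j ∈ range (i + 1), Ring.inverse (u j)) * u 0 + c 0 := by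
  set G : ℕ → R := fun i ↦ c i * ∏ j ∈ range i, Ring.inverse (u (j + 1))
  have hG : ∀ i, c i * (∏ j ∈ range (i + 1), Ring.inverse (u j)) * u 0 = G i := fun i ↦ by
    rw [prod_range_succ', mul_assoc, mul_assoc, Ring.inverse_mul_cancel _ hu₀, mul_one]
  have htel : ∑ i ∈ range n, (G (i + 1) - G i) = G n - G 0 := sum_range_sub G n
  simp only [G, hcn, zero_mul, range_zero, prod_empty, mul_one, sum_sub_distrib] at htel
  rw [neg_mul, sum_mul]
  simp only [hG, G]
  linear_combination -htel

end Telescoping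

theorem isUnit_single_one {A : Type*} [CommSemiring A] (m : ℤ) :
    IsUnit (single m (1 : A) : LaurentSeries A) :=
  IsUnit.of_mul_eq_one (single (-m) 1) (by rw [single_mul_single]; simp)

section LaurentSeries

variable {A : Type*} [CommRing A]

theorem isUnit_single_one_sub_C {c : A} (hc : IsNilpotent c) :
    IsUnit ((single (1 : ℤ) (1 : A) : LaurentSeries A) - C c) := by
  rw [sub_eq_add_neg]
  exact (hc.map C).neg.isUnit_add_left_of_commute (isUnit_single_one 1) (Commute.all _ _)

variable {q : ℕ}

theorem apply_single_of_coeff_apply_eq_pow {σ : LaurentSeries A → LaurentSeries A} (hq : q ≠ 0)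
    (hσ : ∀ f n, (σ f).coeff n = f.coeff n ^ q) (m : ℤ) (c : A) :
    σ (single m c) = single m (c ^ q) := by
  ext k
  rw [hσ, coeff_single, coeff_single]
  split_ifs <;> simp [zero_pow hq]

theorem isUnit_eta {ζ : A} (h : A) (n : ℕ)
    (hu : ∀ j, IsUnit ((single (1 : ℤ) (1 : A) : LaurentSeries A) - C (ζ ^ q ^ j))) :
    IsUnit (eta q ζ h n) := by
  rw [eta, Matrix.isUnit_iff_isUnit_det, Matrix.det_fin_two_of, mul_one, zero_mul, sub_zero]
  exact prod_induction _ IsUnit (fun _ _ ↦ IsUnit.mul) isUnit_one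
    fun i _ ↦ (isUnit_single_one 1).mul (isUnit_ringInverse.mpr (hu i))

theorem diagonal_mul_map_eta (σ : LaurentSeries A →+* LaurentSeries A) (hq : q ≠ 0)
    (hσ : ∀ f n, (σ f).coeff n = f.coeff n ^ q) {n : ℕ} {ζ h : A} (hζ : ζ ^ q ^ n = 0)
    (hh : h ^ q ^ n = 0)
    (hu : ∀ j, IsUnit ((single (1 : ℤ) (1 : A) : LaurentSeries A) - C (ζ ^ q ^ j))) :
    Matrix.diagonal ![(single (1 : ℤ) (1 : A) : LaurentSeries A), 1] * (eta q ζ h n).map σ =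
      eta q ζ h n * !![single (1 : ℤ) (1 : A) - C ζ, 0; C h, 1] := by
  have hσC (c : A) : σ (C c) = C (c ^ q) := apply_single_of_coeff_apply_eq_pow hq hσ 0 c
  have hσz : σ (single 1 1) = single 1 1 := by
    simpa using apply_single_of_coeff_apply_eq_pow hq hσ 1 (1 : A)
  have hσu (j : ℕ) : σ (single 1 1 - C (ζ ^ q ^ j)) = single 1 1 - C (ζ ^ q ^ (j + 1)) := by
    rw [map_sub, hσz, hσC, ← pow_mul, ← pow_succ]
  rw [eta, Matrix.map_lowerUnitriangular]
  refine Matrix.diagonal_mul_eq_mul_lowerUnitriangular ?_ ?_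
  · simp only [map_prod, map_mul, map_ringInverse σ (hu _), hσz, hσu]
    simpa using mul_prod_range_mul_inverse_succ (fun j ↦ single 1 1 - C (ζ ^ q ^ j))
      (isUnit_single_one 1) (hu 0) (by simp [hζ])
  · simp only [map_neg, map_sum, map_mul, map_prod, map_ringInverse σ (hu _), hσC, hσu,
      ← pow_mul, ← pow_succ]
    simpa using neg_sum_range_mul_prod_inverse_succ (fun j ↦ single 1 1 - C (ζ ^ q ^ j))
      (fun i ↦ C (h ^ q ^ i)) (hu 0) (by simp [hh])

end LaurentSeries

theorem stmt_5_general {p e q : ℕ} [Fact p.Prime] (hq : q = p ^ e)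
    {A : Type*} [CommRing A]
    (σ : LaurentSeries A →+* LaurentSeries A)
    (hσ : ∀ (f : LaurentSeries A) (n : ℤ), (σ f).coeff n = f.coeff n ^ q)
    (n : ℕ) (ζ h : A) (hζ : ζ ^ q ^ n = 0) (hh : h ^ q ^ n = 0) :
    (∀ j : ℕ, IsUnit ((HahnSeries.single (1 : ℤ) (1 : A) : LaurentSeries A) -
        HahnSeries.C (ζ ^ q ^ j))) ∧
      IsUnit (eta q ζ h n) ∧
        Ring.inverse (eta q ζ h n) *
            Matrix.diagonal ![(HahnSeries.single (1 : ℤ) (1 : A) : LaurentSeries A), 1] *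
            ((eta q ζ h n).map ⇑σ) =
          !![(HahnSeries.single (1 : ℤ) (1 : A) : LaurentSeries A) - HahnSeries.C ζ, 0;
              HahnSeries.C h, 1] := by
  have hq0 : q ≠ 0 := hq ▸ pow_ne_zero _ (Fact.out : p.Prime).ne_zero
  have hu (j : ℕ) : IsUnit ((HahnSeries.single (1 : ℤ) (1 : A) : LaurentSeries A) -
      HahnSeries.C (ζ ^ q ^ j)) := by
    refine isUnit_single_one_sub_C ⟨q ^ n, ?_⟩
    rw [← pow_mul, mul_comm, pow_mul, hζ, zero_pow (pow_ne_zero _ hq0)]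
  have hη := isUnit_eta h n hu
  refine ⟨hu, hη, ?_⟩
  rw [mul_assoc, diagonal_mul_map_eta σ hq0 hσ hζ hh hu, ← mul_assoc,
    Ring.inverse_mul_cancel _ hη, one_mul]

/-- For `q = p^e` a prime power, `A` a commutative ring containing `𝔽_q`,
`n ≥ 1` and `ζ, h ∈ A` with `ζ^{q^n} = 0` and `h^{q^n} = 0`: each `z − ζ^{q^j}` is a unit of
`A((z))`, the matrix `η_{n,h}` is invertible over `A((z))`, and
`η_{n,h}⁻¹ · diag(z,1) · σ(η_{n,h}) = [[z − ζ, 0], [h, 1]]`. -/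
theorem stmt_5 {p e q : ℕ} [Fact p.Prime] (hq : q = p ^ e) (he : 0 < e)
    {A : Type*} [CommRing A] [Algebra (GaloisField p e) A]
    (σ : LaurentSeries A →+* LaurentSeries A)
    (hσ : ∀ (f : LaurentSeries A) (n : ℤ), (σ f).coeff n = f.coeff n ^ q)
    (n : ℕ) (hn : 1 ≤ n) (ζ h : A) (hζ : ζ ^ q ^ n = 0) (hh : h ^ q ^ n = 0) :
    (∀ j : ℕ, IsUnit ((HahnSeries.single (1 : ℤ) (1 : A) : LaurentSeries A) -
        HahnSeries.C (ζ ^ q ^ j))) ∧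
      IsUnit (eta q ζ h n) ∧
        Ring.inverse (eta q ζ h n) *
            Matrix.diagonal ![(HahnSeries.single (1 : ℤ) (1 : A) : LaurentSeries A), 1] *
            ((eta q ζ h n).map ⇑σ) =
          !![(HahnSeries.single (1 : ℤ) (1 : A) : LaurentSeries A) - HahnSeries.C ζ, 0;
              HahnSeries.C h, 1] :=
  stmt_5_general hq σ hσ n ζ h hζ hh
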